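/- arXiv:1611.07458 — 2 statements merged into one kernel-verified Lean document; each statement's English description precedes it below -/
import Mathlib

section
/- Let s be odd and k = GF(2^s) with trace map Tr : k → GF(2). Suppose θ, β ∈ k satisfy θ^2 + θ = β/(β^2 + β + 1). Then Tr(θ/(θ^2 + θ + 1)) ≠ Tr((θ+1)/(θ^2 + θ + 1)). -/
/-!
In characteristic 2 the hypothesis rewrites as `1/(θ^2+θ+1) = 1 + w^2 + w` with `w = 1/(β+1)`.
Since the Frobenius preserves the trace, `Tr(w^2 + w) = 0`, so the two traces in question add up
to `Tr(1/(θ^2+θ+1)) = Tr 1 = s mod 2 = 1`. The same computation, `Tr(x^2 + x) = 0 ≠ Tr 1`, shows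
that `x^2 + x + 1` has no root in `GF(2^s)`, so none of the denominators vanish.
-/

theorem Algebra.trace_pow_card {K L : Type*} [Field K] [Fintype K] [Field L]
    [Algebra K L] [Algebra.IsAlgebraic K L] (x : L) :
    Algebra.trace K L (x ^ Fintype.card K) = Algebra.trace K L x :=
  Algebra.trace_eq_of_algEquiv (FiniteField.frobeniusAlgEquivOfAlgebraic K L) x

section CharTwo

variable {L : Type*} [Field L] [Algebra (ZMod 2) L]

theorem trace_sq_add_self [Algebra.IsAlgebraic (ZMod 2) L] (x : L) :
    Algebra.trace (ZMod 2) L (x ^ 2 + x) = 0 := by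
  rw [map_add, ← CharTwo.add_self_eq_zero (Algebra.trace (ZMod 2) L x)]
  congr 1
  exact Algebra.trace_pow_card (K := ZMod 2) x

theorem trace_one_of_odd_finrank (hodd : Odd (Module.finrank (ZMod 2) L)) :
    Algebra.trace (ZMod 2) L 1 = 1 := by
  rw [← map_one (algebraMap (ZMod 2) L), Algebra.trace_algebraMap, nsmul_one,
    natCast_eq_one_of_odd_of_two_eq_zero hodd rfl]

theorem sq_add_self_add_one_ne_zero [Algebra.IsAlgebraic (ZMod 2) L]
    (hodd : Odd (Module.finrank (ZMod 2) L)) (x : L) : x ^ 2 + x + 1 ≠ 0 := by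
  have : CharP L 2 := charP_of_injective_algebraMap' (ZMod 2) 2
  intro h
  rw [CharTwo.add_eq_zero] at h
  simpa [h, trace_one_of_odd_finrank hodd] using trace_sq_add_self x

end CharTwo

theorem inv_sq_add_self_add_one_eq {F : Type*} [Field F] [CharP F 2] {θ β : F}
    (hθ : θ ^ 2 + θ + 1 ≠ 0) (hβ : β ^ 2 + β + 1 ≠ 0) (h : θ ^ 2 + θ = β / (β ^ 2 + β + 1)) :
    (θ ^ 2 + θ + 1)⁻¹ = 1 + ((β + 1)⁻¹ ^ 2 + (β + 1)⁻¹) := by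
  have h2 : (2 : F) = 0 := CharTwo.two_eq_zero
  rw [eq_div_iff hβ] at h
  have hv : β + 1 ≠ 0 := by
    rintro hv
    obtain rfl : β = 1 := by linear_combination hv - h2
    exact hθ (by linear_combination h + (1 - θ ^ 2 - θ) * h2)
  refine inv_eq_of_mul_eq_one_right ?_
  field_simp
  linear_combination h + (1 + θ + θ * β + θ ^ 2 + θ ^ 2 * β + β) * h2

theorem stmt_2_general (s : ℕ) (hodd : Odd s) (θ β : GaloisField 2 s)
    (h : θ ^ 2 + θ = β / (β ^ 2 + β + 1)) :
    Algebra.trace (ZMod 2) (GaloisField 2 s) (θ / (θ ^ 2 + θ + 1)) ≠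
      Algebra.trace (ZMod 2) (GaloisField 2 s) ((θ + 1) / (θ ^ 2 + θ + 1)) := by
  have hodd' : Odd (Module.finrank (ZMod 2) (GaloisField 2 s)) := by
    rwa [GaloisField.finrank 2 hodd.pos.ne']
  have hinv := inv_sq_add_self_add_one_eq (sq_add_self_add_one_ne_zero hodd' θ)
    (sq_add_self_add_one_ne_zero hodd' β) h
  have hsum : Algebra.trace (ZMod 2) (GaloisField 2 s) (θ / (θ ^ 2 + θ + 1)) +
      Algebra.trace (ZMod 2) (GaloisField 2 s) ((θ + 1) / (θ ^ 2 + θ + 1)) = 1 := by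
    rw [← map_add, ← add_div, CharTwo.add_cancel_left, one_div, hinv, map_add,
      trace_sq_add_self, trace_one_of_odd_finrank hodd', add_zero]
  intro heq
  rw [heq, CharTwo.add_self_eq_zero] at hsum
  exact zero_ne_one hsum

/-- Lemma 4.1: for `s` odd and `θ, β ∈ GF(2^s)` with `θ^2 + θ = β/(β^2+β+1)`,
the traces of `θ/(θ^2+θ+1)` and `(θ+1)/(θ^2+θ+1)` differ. -/
theorem stmt_2 (s : ℕ) (hs : 0 < s) (hodd : Odd s) (θ β : GaloisField 2 s)
    (h : θ ^ 2 + θ = β / (β ^ 2 + β + 1)) :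
    Algebra.trace (ZMod 2) (GaloisField 2 s) (θ / (θ ^ 2 + θ + 1)) ≠
      Algebra.trace (ZMod 2) (GaloisField 2 s) ((θ + 1) / (θ ^ 2 + θ + 1)) :=
  stmt_2_general s hodd θ β h
end

section
/- Let F be a field of characteristic 2 with x, y ∈ F satisfying y^2 + y = x/(x^2+x+1), x ≠ 1, and x^2 + x + 1 ≠ 0. Then 1/(y^2+y+1) + 1/(x+1)^2 + 1/(x+1) = 1. -/
theorem sq_add_self_add_one_eq_div {F : Type*} [Field F] {x y : F}
    (h : y ^ 2 + y = x / (x ^ 2 + x + 1)) (hx : x ^ 2 + x + 1 ≠ 0) :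
    y ^ 2 + y + 1 = (x + 1) ^ 2 / (x ^ 2 + x + 1) := by
  rw [h, div_add_one hx]
  ring

namespace CharTwo

theorem add_one_ne_zero {R : Type*} [Ring R] [CharP R 2] {x : R} (hx : x ≠ 1) : x + 1 ≠ 0 := by
  rwa [Ne, add_eq_zero_iff_eq_neg, CharTwo.neg_eq]

/-- The numerators add up to `x ^ 2 + 2 * x + 3`, which is `(x + 1) ^ 2` in characteristic 2. -/
theorem div_add_one_sq_add_div_add_one_sq_add_one_div_add_one {F : Type*} [Field F] [CharP F 2]
    {x : F} (hx : x + 1 ≠ 0) :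
    (x ^ 2 + x + 1) / (x + 1) ^ 2 + 1 / (x + 1) ^ 2 + 1 / (x + 1) = 1 := by
  field_simp
  linear_combination CharTwo.two_eq_zero (R := F)

end CharTwo

/-- Identity (4.6): in char 2, with `y^2+y = x/(x^2+x+1)`, `x ≠ 1`, `x^2+x+1 ≠ 0`:
`1/(y^2+y+1) + 1/(x+1)^2 + 1/(x+1) = 1`. -/
theorem stmt_11 (F : Type*) [Field F] (hF : CharP F 2) (x y : F)
    (h : y ^ 2 + y = x / (x ^ 2 + x + 1)) (hx1 : x ≠ 1) (hx : x ^ 2 + x + 1 ≠ 0) :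
    1 / (y ^ 2 + y + 1) + 1 / (x + 1) ^ 2 + 1 / (x + 1) = 1 := by
  rw [sq_add_self_add_one_eq_div h hx, one_div_div]
  exact CharTwo.div_add_one_sq_add_div_add_one_sq_add_one_div_add_one (CharTwo.add_one_ne_zero hx1)
end
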